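/- arXiv:0711.1573 — 6 statements merged into one kernel-verified Lean document; each statement's English description precedes it below -/
import Mathlib

section
/- For positive reals P, Q1, Q2, N0 and a ≥ 0, the conditional dirty-paper rate J(α, a) := log( P·(a·(P+Q1+Q2)+N0) / ((1-α)²·a·P·Q1 + (P+α²·Q1)·(a·Q2+N0)) ) is, for every fixed α ∈ [0,1], a monotonically nondecreasing function of a on [0,∞). -/
/-- For every fixed α ∈ [0,1], the conditional dirty-paper rate
J(α, a) = log( P(a(P+Q1+Q2)+N0) / ((1-α)² a P Q1 + (P+α² Q1)(a Q2+N0)) )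
is a monotonically nondecreasing function of a on [0,∞). -/
theorem bdpc_rate_monotone_in_fading
    (P Q1 Q2 N0 : ℝ) (hP : 0 < P) (hQ1 : 0 < Q1) (hQ2 : 0 < Q2) (hN0 : 0 < N0)
    (α : ℝ) (hα0 : 0 ≤ α) (hα1 : α ≤ 1) :
    MonotoneOn
      (fun a : ℝ => Real.log
        (P * (a * (P + Q1 + Q2) + N0) /
          ((1 - α) ^ 2 * a * P * Q1 + (P + α ^ 2 * Q1) * (a * Q2 + N0))))
      (Set.Ici (0 : ℝ)) := by
  intro a ha b hb hab
  simp only [Set.mem_Ici] at ha hb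
  have hden : ∀ x : ℝ, 0 ≤ x →
      0 < (1 - α) ^ 2 * x * P * Q1 + (P + α ^ 2 * Q1) * (x * Q2 + N0) := by
    intro x hx
    have h1 : 0 ≤ (1 - α) ^ 2 * x * P * Q1 := by positivity
    have h2 : 0 < (P + α ^ 2 * Q1) * (x * Q2 + N0) := by positivity
    linarith
  have hda := hden a ha
  have hdb := hden b hb
  have hnum : ∀ x : ℝ, 0 ≤ x → 0 < P * (x * (P + Q1 + Q2) + N0) := by
    intro x hx; positivity
  apply Real.log_le_log (div_pos (hnum a ha) hda)
  rw [div_le_div_iff₀ hda hdb]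
  have key : 0 ≤ (P + α * Q1) ^ 2 := sq_nonneg _
  nlinarith [mul_nonneg (sub_nonneg.2 hab) (mul_nonneg hN0.le key),
    mul_nonneg (sub_nonneg.2 hab) key, sq_nonneg (1 - α), hN0.le, hP.le]
end

section
/- For positive reals P, Q1, Q2, N0 and a > 0, if α*(a) = aP/(aP + aQ2 + N0), then J(α*(a), a) = log(1 + aP/(aQ2 + N0)), where J(α,a) = log( P(a(P+Q1+Q2)+N0) / ((1-α)² a P Q1 + (P+α² Q1)(a Q2+N0)) ). That is, dirty paper coding with the optimal precoding coefficient achieves the interference-free channel capacity. -/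
/-- With the optimal precoding coefficient α*(a) = aP/(aP+aQ2+N0), the
dirty-paper rate equals the interference-free capacity:
J(α*(a), a) = log(1 + aP/(aQ2+N0)). -/
theorem bdpc_rate_at_costa_alpha_eq_capacity
    (P Q1 Q2 N0 a : ℝ) (hP : 0 < P) (hQ1 : 0 < Q1) (hQ2 : 0 < Q2) (hN0 : 0 < N0)
    (ha : 0 < a) :
    Real.log
      (P * (a * (P + Q1 + Q2) + N0) /
        ((1 - a * P / (a * P + a * Q2 + N0)) ^ 2 * a * P * Q1
          + (P + (a * P / (a * P + a * Q2 + N0)) ^ 2 * Q1) * (a * Q2 + N0)))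
      = Real.log (1 + a * P / (a * Q2 + N0)) := by
  have hD : a * P + a * Q2 + N0 > 0 := by positivity
  have h2 : a * Q2 + N0 > 0 := by positivity
  congr 1
  field_simp
  ring
end

section
/- Let P, Q1, Q2, N0 > 0, let R > 0 with e^R - 1 < P/Q2, let a* = N0(e^R-1)/(P - (e^R-1)Q2), and set α* = a*P/(a*P + a*Q2 + N0). Then for every a ≥ a*, J(α*, a) ≥ R, where J(α,a) = log( P(a(P+Q1+Q2)+N0) / ((1-α)² a P Q1 + (P+α² Q1)(a Q2+N0)) ). In other words, choosing the precoding coefficient matched to the threshold fading level a* guarantees rate R for every fading realization at least a*. -/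
/-- Choosing the precoding coefficient matched to the threshold fading level
a* = N0(e^R-1)/(P-(e^R-1)Q2) guarantees rate R for every fading realization
a ≥ a*: J(α*, a) ≥ R where α* = a*P/(a*P + a*Q2 + N0). -/
theorem bdpc_threshold_guarantees_rate
    (P Q1 Q2 N0 R : ℝ) (hP : 0 < P) (hQ1 : 0 < Q1) (hQ2 : 0 < Q2) (hN0 : 0 < N0)
    (hR : 0 < R) (hfeas : Real.exp R - 1 < P / Q2) :
    let aStar := N0 * (Real.exp R - 1) / (P - (Real.exp R - 1) * Q2)
    let αStar := aStar * P / (aStar * P + aStar * Q2 + N0)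
    ∀ a, aStar ≤ a →
      R ≤ Real.log
        (P * (a * (P + Q1 + Q2) + N0) /
          ((1 - αStar) ^ 2 * a * P * Q1
            + (P + αStar ^ 2 * Q1) * (a * Q2 + N0))) := by
  have hE1 : 1 < Real.exp R := by
    have := Real.add_one_le_exp R; linarith
  set E := Real.exp R with hEdef
  set t := E - 1 with htdef
  have ht : 0 < t := by linarith
  have hE0 : 0 < E := by linarith
  have hden : 0 < P - t * Q2 := by
    have := (lt_div_iff₀ hQ2).mp hfeas; linarith
  intro aStar αStar a ha
  have haSdef : aStar = N0 * t / (P - t * Q2) := rfl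
  have haS : 0 < aStar := by rw [haSdef]; positivity
  have ha0 : 0 < a := lt_of_lt_of_le haS ha
  have hd2 : 0 < aStar * P + aStar * Q2 + N0 := by positivity
  have hα : αStar = t / E := by
    show aStar * P / (aStar * P + aStar * Q2 + N0) = t / E
    rw [haSdef]
    field_simp
    ring
  have hkey : t * N0 ≤ a * (P - t * Q2) := by
    have h := mul_le_mul_of_nonneg_right ha hden.le
    rw [haSdef, div_mul_cancel₀ _ (ne_of_gt hden)] at h
    linarith [h]
  have hD : 0 < (1 - αStar) ^ 2 * a * P * Q1 + (P + αStar ^ 2 * Q1) * (a * Q2 + N0) := by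
    have h1 : 0 ≤ (1 - αStar) ^ 2 * a * P * Q1 :=
      mul_nonneg (mul_nonneg (mul_nonneg (sq_nonneg _) ha0.le) hP.le) hQ1.le
    have h2 : 0 < (P + αStar ^ 2 * Q1) * (a * Q2 + N0) := by
      apply mul_pos
      · nlinarith [sq_nonneg αStar]
      · nlinarith [mul_pos ha0 hQ2]
    linarith
  have hnum : 0 < P * (a * (P + Q1 + Q2) + N0) := by
    apply mul_pos hP; nlinarith
  rw [Real.le_log_iff_exp_le (div_pos hnum hD), le_div_iff₀ hD]
  have h2 : E * (P * (a * (P + Q1 + Q2) + N0)) -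
      E * (E * ((1 - αStar) ^ 2 * a * P * Q1 + (P + αStar ^ 2 * Q1) * (a * Q2 + N0))) =
      (a * (P - t * Q2) - t * N0) * (E * P + t * Q1) := by
    rw [hα]
    field_simp
    ring
  have h1 : 0 ≤ (a * (P - t * Q2) - t * N0) * (E * P + t * Q1) := by
    apply mul_nonneg (by linarith) (by positivity)
  nlinarith [h1, h2, hE0]
end

section
/- Let P, Q1, Q2, N0 > 0 and R > 0 with e^R - 1 < P/Q2. For any α ∈ ℝ, the set of fading values {a ≥ 0 : J(α, a) ≤ R} contains the set {a ≥ 0 : log(1 + aP/(aQ2+N0)) ≤ R}, where J(α,a) = log( P(a(P+Q1+Q2)+N0) / ((1-α)² a P Q1 + (P+α² Q1)(a Q2+N0)) ). Consequently, for any probability distribution on a, the outage probability ℙ[J(α,a) ≤ R] is at least ℙ[log(1 + aP/(aQ2+N0)) ≤ R], and this lower bound is attained by the choice α* = (e^R - 1)/e^R. -/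
open MeasureTheory

/-- Key inequality: J α a ≤ log(1+aP/(aQ2+N0)) for a ≥ 0. -/
lemma bdpc_aux1 (P Q1 Q2 N0 : ℝ) (hP : 0 < P) (hQ1 : 0 < Q1) (hQ2 : 0 < Q2)
    (hN0 : 0 < N0) (α a : ℝ) (ha : 0 ≤ a) :
    Real.log (P * (a * (P + Q1 + Q2) + N0) /
        ((1 - α) ^ 2 * a * P * Q1 + (P + α ^ 2 * Q1) * (a * Q2 + N0))) ≤
      Real.log (1 + a * P / (a * Q2 + N0)) := by
  have hK : 0 < a * Q2 + N0 := by positivity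
  have hD : 0 < (1 - α) ^ 2 * a * P * Q1 + (P + α ^ 2 * Q1) * (a * Q2 + N0) := by positivity
  have hnum : 0 < P * (a * (P + Q1 + Q2) + N0) := by positivity
  have h1 : 1 + a * P / (a * Q2 + N0) = ((a * Q2 + N0) + a * P) / (a * Q2 + N0) := by
    field_simp
  apply Real.log_le_log (by positivity)
  rw [div_le_iff₀ hD, h1, div_mul_eq_mul_div, le_div_iff₀ hK]
  nlinarith [sq_nonneg ((a * (P + Q2) + N0) * α - a * P), mul_pos hP hQ1, sq_nonneg (1 - α)]

/-- Reverse direction for α*. -/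
lemma bdpc_aux2 (P Q1 Q2 N0 R : ℝ) (hP : 0 < P) (hQ1 : 0 < Q1) (hQ2 : 0 < Q2)
    (hN0 : 0 < N0) (hR : 0 < R) (a : ℝ) (ha : 0 ≤ a)
    (hJ : Real.log (P * (a * (P + Q1 + Q2) + N0) /
        ((1 - (Real.exp R - 1) / Real.exp R) ^ 2 * a * P * Q1 +
          (P + ((Real.exp R - 1) / Real.exp R) ^ 2 * Q1) * (a * Q2 + N0))) ≤ R) :
    Real.log (1 + a * P / (a * Q2 + N0)) ≤ R := by
  set t := Real.exp R with htdef
  have ht1 : 1 < t := by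
    rw [htdef]; calc (1:ℝ) = Real.exp 0 := (Real.exp_zero).symm
    _ < Real.exp R := Real.exp_lt_exp.2 hR
  have ht0 : 0 < t := lt_trans one_pos ht1
  have hK : 0 < a * Q2 + N0 := by positivity
  have hD : 0 < (1 - (t - 1) / t) ^ 2 * a * P * Q1 +
      (P + ((t - 1) / t) ^ 2 * Q1) * (a * Q2 + N0) := by
    have h1 : 0 < P + ((t - 1) / t) ^ 2 * Q1 := by positivity
    have h2 : 0 ≤ (1 - (t - 1) / t) ^ 2 * a * P * Q1 := by positivity
    nlinarith [mul_pos h1 hK]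
  have hnum : 0 < P * (a * (P + Q1 + Q2) + N0) := by positivity
  have hle : P * (a * (P + Q1 + Q2) + N0) /
      ((1 - (t - 1) / t) ^ 2 * a * P * Q1 +
        (P + ((t - 1) / t) ^ 2 * Q1) * (a * Q2 + N0)) ≤ t := by
    exact (Real.log_le_iff_le_exp (by positivity)).1 hJ
  rw [div_le_iff₀ hD] at hle
  -- clear denominators: multiply by t^2
  have hle2 : t * (P * (a * (P + Q1 + Q2) + N0)) ≤
      a * P * Q1 + (t ^ 2 * P + (t - 1) ^ 2 * Q1) * (a * Q2 + N0) := by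
    have hne : t ≠ 0 := ne_of_gt ht0
    have hD2 : t * ((1 - (t - 1) / t) ^ 2 * a * P * Q1 +
        (P + ((t - 1) / t) ^ 2 * Q1) * (a * Q2 + N0)) =
        (a * P * Q1 + (t ^ 2 * P + (t - 1) ^ 2 * Q1) * (a * Q2 + N0)) / t := by
      field_simp; ring
    rw [hD2, le_div_iff₀ ht0] at hle
    nlinarith [hle]
  have hfac : 0 < t * P + (t - 1) * Q1 := by nlinarith
  have hkey : (a * P - (t - 1) * (a * Q2 + N0)) * (t * P + (t - 1) * Q1) ≤ 0 := by
    nlinarith [hle2]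
  have hfin : a * P ≤ (t - 1) * (a * Q2 + N0) := by
    by_contra h
    push_neg at h
    exact absurd hkey (not_le.2 (mul_pos (by linarith) hfac))
  rw [Real.log_le_iff_le_exp (by positivity)]
  have h2 : a * P / (a * Q2 + N0) ≤ t - 1 :=
    (div_le_iff₀ hK).2 (by nlinarith)
  have : (1 : ℝ) + a * P / (a * Q2 + N0) ≤ t := by linarith
  exact this

/-- For any α, the B-DPC outage set {a ≥ 0 : J(α,a) ≤ R} contains the
interference-free outage set {a ≥ 0 : log(1+aP/(aQ2+N0)) ≤ R}; hence for any
probability distribution of the fading, ℙ[J(α,a) ≤ R] ≥ ℙ[log(1+aP/(aQ2+N0)) ≤ R],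
and the lower bound is attained by α* = (e^R - 1)/e^R. -/
theorem bdpc_outage_lower_bound_attained
    (P Q1 Q2 N0 R : ℝ) (hP : 0 < P) (hQ1 : 0 < Q1) (hQ2 : 0 < Q2) (hN0 : 0 < N0)
    (hR : 0 < R) (hfeas : Real.exp R - 1 < P / Q2) :
    let J := fun (α a : ℝ) => Real.log
      (P * (a * (P + Q1 + Q2) + N0) /
        ((1 - α) ^ 2 * a * P * Q1 + (P + α ^ 2 * Q1) * (a * Q2 + N0)))
    let base := {a : ℝ | 0 ≤ a ∧ Real.log (1 + a * P / (a * Q2 + N0)) ≤ R}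
    let αStar := (Real.exp R - 1) / Real.exp R
    (∀ α : ℝ, base ⊆ {a : ℝ | 0 ≤ a ∧ J α a ≤ R}) ∧
    (∀ μ : Measure ℝ, IsProbabilityMeasure μ →
      ((∀ α : ℝ, μ base ≤ μ {a : ℝ | 0 ≤ a ∧ J α a ≤ R}) ∧
        μ {a : ℝ | 0 ≤ a ∧ J αStar a ≤ R} = μ base)) := by
  intro J base αStar
  have hsub : ∀ α : ℝ, base ⊆ {a : ℝ | 0 ≤ a ∧ J α a ≤ R} := by
    intro α a ⟨ha, hl⟩
    exact ⟨ha, le_trans (bdpc_aux1 P Q1 Q2 N0 hP hQ1 hQ2 hN0 α a ha) hl⟩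
  have heq : {a : ℝ | 0 ≤ a ∧ J αStar a ≤ R} = base := by
    apply Set.Subset.antisymm
    · intro a ⟨ha, hj⟩
      exact ⟨ha, bdpc_aux2 P Q1 Q2 N0 R hP hQ1 hQ2 hN0 hR a ha hj⟩
    · exact hsub αStar
  exact ⟨hsub, fun μ _ => ⟨fun α => measure_mono (hsub α), by rw [heq]⟩⟩
end

section
/- Let g_1 ≥ g_2 > 0 and ρ > 0. The two-user superposition rate region R* = {(R_1,R_2) : ∃ γ ∈ [0,1], R_1 ≤ log(1 + g_1 γ ρ), R_2 ≤ log(1 + g_2(1-γ)ρ/(g_2 γ ρ + 1))} contains the time-sharing region R^td = {(R_1,R_2) : ∃ μ ∈ [0,1], ∃ η_1, η_2 ≥ 0 with μη_1 + (1-μ)η_2 = 1, R_1 ≤ μ log(1 + g_1 η_1 ρ), R_2 ≤ (1-μ) log(1 + g_2 η_2 ρ)}. -/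
/-!
Given a time-sharing point `(μ, η₁, η₂)`, give the strong user the superposition power `γ` with
`1 + a γ = (1 + a η₁) ^ μ` (where `a = g₁ ρ`); Bernoulli's inequality and `μ η₁ ≤ 1` put `γ` in
`[0, 1]`, and the strong user's rate is matched exactly. For the weak user (`b = g₂ ρ ≤ a`),
concavity of `y ↦ y ^ μ` gives `1 + b γ ≤ (1 + b η₁) ^ μ`, and weighted AM–GM gives
`(1 + b η₁) ^ μ (1 + b η₂) ^ (1 - μ) ≤ 1 + b`, so `(1 + b η₂) ^ (1 - μ) ≤ (1 + b) / (1 + b γ)`.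
-/

open Real Set

lemma one_add_mul_rpow_sub_one_le {μ t x : ℝ} (hμ0 : 0 ≤ μ) (hμ1 : μ ≤ 1)
    (ht0 : 0 ≤ t) (ht1 : t ≤ 1) (hx : 0 ≤ x) :
    1 + t * ((1 + x) ^ μ - 1) ≤ (1 + t * x) ^ μ := by
  have h := (concaveOn_rpow hμ0 hμ1).2 (mem_Ici.2 zero_le_one)
    (mem_Ici.2 (by linarith : 0 ≤ 1 + x)) (sub_nonneg.2 ht1) ht0 (by ring)
  simp only [smul_eq_mul, one_rpow] at h
  calc 1 + t * ((1 + x) ^ μ - 1) = (1 - t) * 1 + t * (1 + x) ^ μ := by ring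
    _ ≤ ((1 - t) * 1 + t * (1 + x)) ^ μ := h
    _ = (1 + t * x) ^ μ := by ring_nf

lemma exists_mem_Icc_one_add_mul_eq_rpow {a x μ : ℝ} (ha : 0 < a) (hx : 0 ≤ x)
    (hμ0 : 0 ≤ μ) (hμ1 : μ ≤ 1) (hμx : μ * x ≤ a) :
    ∃ γ ∈ Icc (0 : ℝ) 1, 1 + a * γ = (1 + x) ^ μ := by
  have hlow : 1 ≤ (1 + x) ^ μ := one_le_rpow (by linarith) hμ0
  have hup : (1 + x) ^ μ ≤ 1 + μ * x := rpow_one_add_le_one_add_mul_self (by linarith) hμ0 hμ1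
  refine ⟨((1 + x) ^ μ - 1) / a, ⟨by positivity, ?_⟩, by field_simp; ring⟩
  rw [div_le_one ha]
  linarith

section

variable {a b μ η₁ η₂ γ : ℝ}

lemma rpow_le_one_add_div_of_one_add_mul_eq_rpow (ha : 0 < a) (hb : 0 ≤ b) (hba : b ≤ a)
    (hμ0 : 0 ≤ μ) (hμ1 : μ ≤ 1) (hη₁ : 0 ≤ η₁) (hη₂ : 0 ≤ η₂)
    (hsum : μ * η₁ + (1 - μ) * η₂ = 1) (hγ : 1 + a * γ = (1 + a * η₁) ^ μ) :
    (1 + b * η₂) ^ (1 - μ) ≤ 1 + b * (1 - γ) / (b * γ + 1) := by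
  have hγ0 : 0 ≤ γ := by
    have : 1 ≤ (1 + a * η₁) ^ μ := one_le_rpow (by nlinarith) hμ0
    nlinarith
  have hweak : 1 + b * γ ≤ (1 + b * η₁) ^ μ := by
    have h := one_add_mul_rpow_sub_one_le hμ0 hμ1 (div_nonneg hb ha.le) ((div_le_one ha).2 hba)
      (mul_nonneg ha.le hη₁)
    have hcancel (y : ℝ) : b / a * (a * y) = b * y := by field_simp
    rwa [← hγ, add_sub_cancel_left, hcancel, hcancel] at h
  have hamgm : (1 + b * η₁) ^ μ * (1 + b * η₂) ^ (1 - μ) ≤ 1 + b := by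
    have h := geom_mean_le_arith_mean2_weighted hμ0 (sub_nonneg.2 hμ1)
      (by positivity : 0 ≤ 1 + b * η₁) (by positivity : 0 ≤ 1 + b * η₂) (by ring)
    linear_combination h + b * hsum
  have hpos : 0 < b * γ + 1 := by positivity
  have hB : 0 ≤ (1 + b * η₂) ^ (1 - μ) := by positivity
  rw [show 1 + b * (1 - γ) / (b * γ + 1) = (1 + b) / (b * γ + 1) by field_simp; ring,
    le_div_iff₀ hpos]
  linarith [mul_le_mul_of_nonneg_left hweak hB]

theorem exists_superposition_rates_ge_time_sharing (ha : 0 < a) (hb : 0 ≤ b) (hba : b ≤ a)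
    (hμ0 : 0 ≤ μ) (hμ1 : μ ≤ 1) (hη₁ : 0 ≤ η₁) (hη₂ : 0 ≤ η₂)
    (hsum : μ * η₁ + (1 - μ) * η₂ = 1) :
    ∃ γ ∈ Icc (0 : ℝ) 1, μ * log (1 + a * η₁) ≤ log (1 + a * γ) ∧
      (1 - μ) * log (1 + b * η₂) ≤ log (1 + b * (1 - γ) / (b * γ + 1)) := by
  have hμη₁ : μ * η₁ ≤ 1 := by nlinarith [mul_nonneg (sub_nonneg.2 hμ1) hη₂]
  have haμη₁ : μ * (a * η₁) ≤ a := by nlinarith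
  obtain ⟨γ, hγI, hγ⟩ :=
    exists_mem_Icc_one_add_mul_eq_rpow ha (mul_nonneg ha.le hη₁) hμ0 hμ1 haμη₁
  refine ⟨γ, hγI, ?_, ?_⟩
  · rw [hγ, log_rpow (by positivity)]
  · rw [← log_rpow (by positivity)]
    exact log_le_log (by positivity)
      (rpow_le_one_add_div_of_one_add_mul_eq_rpow ha hb hba hμ0 hμ1 hη₁ hη₂ hsum hγ)

end

/-- The two-user superposition rate region contains the time-sharing-with-power-
allocation region when g_1 ≥ g_2 > 0. -/
theorem superposition_region_contains_time_sharing
    (g1 g2 ρ : ℝ) (hg12 : g2 ≤ g1) (hg2 : 0 < g2) (hρ : 0 < ρ)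
    (R1 R2 : ℝ)
    (hTD : ∃ μ ∈ Set.Icc (0 : ℝ) 1, ∃ η1 η2 : ℝ, 0 ≤ η1 ∧ 0 ≤ η2 ∧
      μ * η1 + (1 - μ) * η2 = 1 ∧
      R1 ≤ μ * Real.log (1 + g1 * η1 * ρ) ∧
      R2 ≤ (1 - μ) * Real.log (1 + g2 * η2 * ρ)) :
    ∃ γ ∈ Set.Icc (0 : ℝ) 1,
      R1 ≤ Real.log (1 + g1 * γ * ρ) ∧
      R2 ≤ Real.log (1 + g2 * (1 - γ) * ρ / (g2 * γ * ρ + 1)) := by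
  obtain ⟨μ, ⟨hμ0, hμ1⟩, η1, η2, hη1, hη2, hsum, hR1, hR2⟩ := hTD
  obtain ⟨γ, hγI, h1, h2⟩ := exists_superposition_rates_ge_time_sharing
    (mul_pos (hg2.trans_le hg12) hρ) (by positivity : 0 ≤ g2 * ρ)
    (mul_le_mul_of_nonneg_right hg12 hρ.le) hμ0 hμ1 hη1 hη2 hsum
  simp only [mul_right_comm _ ρ] at h1 h2
  exact ⟨γ, hγI, hR1.trans h1, hR2.trans h2⟩
end

section
/- Let g_1 > g_2 > 0 and ρ > 0. Then the superposition region strictly dominates time-sharing: there exists γ ∈ (0,1) such that the rate pair (R_1, R_2) with R_1 = log(1 + g_1 γ ρ) and R_2 = log(1 + g_2(1-γ)ρ/(g_2γρ+1)) lies strictly outside the time-sharing region, i.e., for all μ ∈ (0,1) and η_1, η_2 ≥ 0 with μη_1 + (1-μ)η_2 = 1, either μ log(1+g_1η_1ρ) < R_1 or (1-μ) log(1+g_2η_2ρ) < R_2. -/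
open Real Set

private lemma bergmans_aux (A B γ μ η1 η2 : ℝ) (hB : 0 < B) (hAB : B < A)
    (hγ0 : 0 < γ) (hγ1 : γ < 1) (hμ0 : 0 < μ) (hμ1 : μ < 1)
    (h1 : 0 ≤ η1) (h2 : 0 ≤ η2) (hsum : μ * η1 + (1 - μ) * η2 = 1)
    (hcon : Real.log (1 + A * γ) ≤ μ * Real.log (1 + A * η1)) :
    (1 - μ) * Real.log (1 + B * η2) < Real.log (1 + B) - Real.log (1 + B * γ) := by
  have hA : 0 < A := hB.trans hAB
  set p : ℝ := 1 / μ with hpdef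
  have hp1 : 1 < p := by rw [hpdef, lt_div_iff₀ hμ0]; linarith
  have hpμ : p * μ = 1 := by rw [hpdef]; field_simp
  have hAγpos : (0:ℝ) < 1 + A * γ := by positivity
  have hAη1pos : (0:ℝ) < 1 + A * η1 := by positivity
  have hBη1pos : (0:ℝ) < 1 + B * η1 := by positivity
  have hBη2pos : (0:ℝ) < 1 + B * η2 := by positivity
  have hBγpos : (0:ℝ) < 1 + B * γ := by positivity
  -- Step 1: 1 + A*η1 ≥ (1 + A*γ)^p
  have step1 : (1 + A * γ) ^ p ≤ 1 + A * η1 := by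
    have hlog : Real.log ((1 + A * γ) ^ p) ≤ Real.log (1 + A * η1) := by
      rw [Real.log_rpow hAγpos]
      calc p * Real.log (1 + A * γ) ≤ p * (μ * Real.log (1 + A * η1)) := by
            apply mul_le_mul_of_nonneg_left hcon (by positivity)
        _ = Real.log (1 + A * η1) := by rw [← mul_assoc, hpμ, one_mul]
    have := Real.exp_le_exp.2 hlog
    rwa [Real.exp_log (by positivity), Real.exp_log hAη1pos] at this
  -- Step 2 (strict convexity): (1 + B*γ)^p < 1 + (B/A) * ((1 + A*γ)^p - 1)
  have step2 : (1 + B * γ) ^ p < 1 + (B / A) * ((1 + A * γ) ^ p - 1) := by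
    have hconv := strictConvexOn_rpow hp1
    have hmem1 : (1:ℝ) ∈ Ici (0:ℝ) := by norm_num
    have hmem2 : (1 + A * γ) ∈ Ici (0:ℝ) := le_of_lt hAγpos
    have hne : (1:ℝ) ≠ 1 + A * γ := by nlinarith
    have hw1 : (0:ℝ) < 1 - B / A := by
      have : B / A < 1 := (div_lt_one hA).2 hAB
      linarith
    have hw2 : (0:ℝ) < B / A := by positivity
    have hww : (1 - B / A) + B / A = 1 := by ring
    have := hconv.2 hmem1 hmem2 hne hw1 hw2 hww
    simp only [smul_eq_mul] at this
    have harg : (1 - B / A) * 1 + B / A * (1 + A * γ) = 1 + B * γ := by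
      field_simp
      ring
    rw [harg, Real.one_rpow] at this
    calc (1 + B * γ) ^ p < (1 - B / A) * 1 + B / A * (1 + A * γ) ^ p := this
      _ = 1 + (B / A) * ((1 + A * γ) ^ p - 1) := by ring
  -- Step 3: (1 + B*γ)^p < 1 + B*η1
  have step3 : (1 + B * γ) ^ p < 1 + B * η1 := by
    have h' : (B / A) * ((1 + A * γ) ^ p - 1) ≤ B * η1 := by
      have h1' : (1 + A * γ) ^ p - 1 ≤ A * η1 := by linarith
      have : (B / A) * ((1 + A * γ) ^ p - 1) ≤ (B / A) * (A * η1) :=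
        mul_le_mul_of_nonneg_left h1' (by positivity)
      calc (B / A) * ((1 + A * γ) ^ p - 1) ≤ (B / A) * (A * η1) := this
        _ = B * η1 := by field_simp
    linarith
  -- Step 4: 1 + B*γ < (1 + B*η1)^μ
  have step4 : 1 + B * γ < (1 + B * η1) ^ μ := by
    have hb : (0:ℝ) ≤ (1 + B * γ) ^ p := le_of_lt (by positivity)
    have := Real.rpow_lt_rpow hb step3 hμ0
    rwa [← Real.rpow_mul (le_of_lt hBγpos), hpμ, Real.rpow_one] at this
  -- Step 5 (AM-GM): (1 + B*η1)^μ * (1 + B*η2)^(1-μ) ≤ 1 + B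
  have step5 : (1 + B * η1) ^ μ * (1 + B * η2) ^ (1 - μ) ≤ 1 + B := by
    have := @Real.geom_mean_le_arith_mean2_weighted μ (1 - μ) (1 + B * η1) (1 + B * η2)
      (le_of_lt hμ0) (by linarith) (le_of_lt hBη1pos) (le_of_lt hBη2pos) (by ring)
    calc (1 + B * η1) ^ μ * (1 + B * η2) ^ (1 - μ)
        ≤ μ * (1 + B * η1) + (1 - μ) * (1 + B * η2) := this
      _ = 1 + B * (μ * η1 + (1 - μ) * η2) := by ring
      _ = 1 + B := by rw [hsum]; ring
  -- Combine: (1 + B*γ) * (1 + B*η2)^(1-μ) < 1 + B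
  have key : (1 + B * γ) * (1 + B * η2) ^ (1 - μ) < 1 + B := by
    have hpow : (0:ℝ) < (1 + B * η2) ^ (1 - μ) := by positivity
    calc (1 + B * γ) * (1 + B * η2) ^ (1 - μ)
        < (1 + B * η1) ^ μ * (1 + B * η2) ^ (1 - μ) :=
          mul_lt_mul_of_pos_right step4 hpow
      _ ≤ 1 + B := step5
  -- Take logs
  have hlt : Real.log ((1 + B * γ) * (1 + B * η2) ^ (1 - μ)) < Real.log (1 + B) :=
    Real.log_lt_log (by positivity) key
  rw [Real.log_mul (ne_of_gt hBγpos) (ne_of_gt (by positivity)),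
    Real.log_rpow hBη2pos] at hlt
  linarith

/-- Bergmans' strict dominance: for a two-user degraded Gaussian BC with
distinct gains g_1 > g_2 > 0, some superposition boundary point
(log(1+g_1γρ), log(1+g_2(1-γ)ρ/(g_2γρ+1))) with γ ∈ (0,1) lies strictly
outside the time-sharing-with-power-allocation region. -/
theorem superposition_strictly_dominates_time_sharing
    (g1 g2 ρ : ℝ) (hg : g2 < g1) (hg2 : 0 < g2) (hρ : 0 < ρ) :
    ∃ γ ∈ Set.Ioo (0 : ℝ) 1,
      ∀ μ ∈ Set.Ioo (0 : ℝ) 1, ∀ η1 η2 : ℝ, 0 ≤ η1 → 0 ≤ η2 →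
        μ * η1 + (1 - μ) * η2 = 1 →
        μ * Real.log (1 + g1 * η1 * ρ) < Real.log (1 + g1 * γ * ρ) ∨
        (1 - μ) * Real.log (1 + g2 * η2 * ρ)
          < Real.log (1 + g2 * (1 - γ) * ρ / (g2 * γ * ρ + 1)) := by
  refine ⟨1/2, ⟨by norm_num, by norm_num⟩, ?_⟩
  rintro μ ⟨hμ0, hμ1⟩ η1 η2 h1 h2 hsum
  set A : ℝ := g1 * ρ with hAdef
  set B : ℝ := g2 * ρ with hBdef
  have hB : 0 < B := by positivity
  have hAB : B < A := by
    apply mul_lt_mul_of_pos_right hg hρ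
  by_cases hcase : μ * Real.log (1 + g1 * η1 * ρ) < Real.log (1 + g1 * (1/2) * ρ)
  · exact Or.inl hcase
  · push_neg at hcase
    right
    have hcon : Real.log (1 + A * (1/2)) ≤ μ * Real.log (1 + A * η1) := by
      have e1 : 1 + A * (1/2) = 1 + g1 * (1/2) * ρ := by rw [hAdef]; ring
      have e2 : 1 + A * η1 = 1 + g1 * η1 * ρ := by rw [hAdef]; ring
      rw [e1, e2]; exact hcase
    have main := bergmans_aux A B (1/2) μ η1 η2 hB hAB (by norm_num) (by norm_num)
      hμ0 hμ1 h1 h2 hsum hcon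
    have e3 : 1 + B * η2 = 1 + g2 * η2 * ρ := by rw [hBdef]; ring
    have e4 : Real.log (1 + g2 * (1 - 1/2) * ρ / (g2 * (1/2) * ρ + 1))
        = Real.log (1 + B) - Real.log (1 + B * (1/2)) := by
      have hd : (0:ℝ) < g2 * (1/2) * ρ + 1 := by positivity
      have e : 1 + g2 * (1 - 1/2) * ρ / (g2 * (1/2) * ρ + 1)
          = (1 + B) / (1 + B * (1/2)) := by
        rw [hBdef]
        field_simp
        ring
      rw [e, Real.log_div (by positivity) (by positivity)]
    rw [← e3, e4]
    exact main
end
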